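/- For any v : ℝ^N → ℂ of class C¹ and any A : ℝ^N → ℝ^N, at every point where v ≠ 0 one has |∇v/i - A v|² = |Im(conj(v)(∇v - i A v))|²/|v|² + |∇|v||². -/

import Mathlib

theorem stmt_5 {N : ℕ}
    (v : (Fin N → ℝ) → ℂ) (hv : ContDiff ℝ 1 v)
    (A : (Fin N → ℝ) → (Fin N → ℝ))
    (x : Fin N → ℝ) (hx : v x ≠ 0)
    (L : (Fin N → ℝ) →L[ℝ] ℂ) (hL : HasFDerivAt v L x)
    (M : (Fin N → ℝ) →L[ℝ] ℝ)
    (hM : HasFDerivAt (fun y => ‖v y‖) M x) :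
    ∑ j, ‖L (Pi.single j 1) / Complex.I - (A x j : ℂ) * v x‖ ^ 2
      = (∑ j, ((starRingEnd ℂ (v x) *
          (L (Pi.single j 1) - Complex.I * (A x j : ℂ) * v x)).im) ^ 2)
            / ‖v x‖ ^ 2
        + ∑ j, (M (Pi.single j 1)) ^ 2 := by
  have hne : ‖v x‖ ≠ 0 := by simpa using hx
  have h1 := hL.norm_sq
  have h2 : HasFDerivAt (‖v ·‖ ^ 2)
      (‖v x‖ • M + ‖v x‖ • M) x := by
    rw [show (‖v ·‖ ^ 2) = fun y => ‖v y‖ * ‖v y‖ from funext fun y => pow_two _]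
    exact hM.mul hM
  have heq := h1.unique h2
  have key : ∀ w, ‖v x‖ * M w = ((starRingEnd ℂ) (v x) * L w).re := by
    intro w
    have := congrArg (fun (T : (Fin N → ℝ) →L[ℝ] ℝ) => T w) heq
    simp only [ContinuousLinearMap.add_apply, ContinuousLinearMap.smul_apply,
      ContinuousLinearMap.coe_smul', Pi.smul_apply, two_smul,
      ContinuousLinearMap.comp_apply, innerSL_apply_apply, smul_eq_mul] at this
    have h3 : inner ℝ (v x) (L w) = ((starRingEnd ℂ) (v x) * L w).re :=
      (Complex.inner _ _).trans (by rw [mul_comm])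
    rw [h3] at this
    linarith [this]
  have hMj : ∀ w, M w = ((starRingEnd ℂ) (v x) * L w).re / ‖v x‖ := by
    intro w
    rw [eq_div_iff hne, mul_comm]
    exact key w
  rw [Finset.sum_div, ← Finset.sum_add_distrib]
  refine Finset.sum_congr rfl fun j _ => ?_
  rw [hMj]
  set a := L (Pi.single j 1)
  set z := v x
  set c := A x j
  have habs : ‖z‖ ^ 2 = z.re ^ 2 + z.im ^ 2 := by
    rw [Complex.sq_norm, Complex.normSq_apply]; ring
  rw [div_pow, habs]
  rw [show a / Complex.I - (c : ℂ) * z = -(a * Complex.I) - (c : ℂ) * z from by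
    rw [Complex.div_I]]
  rw [Complex.sq_norm, Complex.normSq_apply]
  have hz2 : z.re ^ 2 + z.im ^ 2 ≠ 0 := by rw [← habs]; positivity
  simp only [Complex.sub_re, Complex.sub_im, Complex.mul_re, Complex.mul_im,
    Complex.neg_re, Complex.neg_im, Complex.I_re, Complex.I_im,
    Complex.ofReal_re, Complex.ofReal_im, Complex.conj_re, Complex.conj_im]
  field_simp
  ring
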